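/- Let {P_j} be a sequence of parabolic Möbius transformations converging in PSL(2,ℂ) to a parabolic Möbius transformation P. Then there exists a sequence {β_j} of Möbius transformations converging to the identity such that β_j P_j β_j⁻¹ = P for all j. -/

import Mathlib

open scoped Pointwise Topology LinearAlgebra.Projectivization
open Filter Matrix

set_option maxHeartbeats 800000
set_option synthInstance.maxHeartbeats 400000

noncomputable section

/-- `SL(2,ℂ)`. -/
abbrev SL2C := Matrix.SpecialLinearGroup (Fin 2) ℂ

instance : TopologicalSpace SL2C := instTopologicalSpaceSubtype

/-- `PSL(2,ℂ)`, the quotient of `SL(2,ℂ)` by its center `{±I}`. -/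
abbrev PSL2 := SL2C ⧸ Subgroup.center SL2C

/-- The Riemann sphere, realized as the complex projective line. -/
abbrev RSphere := ℙ ℂ (Fin 2 → ℂ)

instance : TopologicalSpace RSphere :=
  inferInstanceAs (TopologicalSpace (Quotient (projectivizationSetoid ℂ (Fin 2 → ℂ))))

/-- The action of `SL(2,ℂ)` on the Riemann sphere by Möbius transformations. -/
instance SL2C.mulActionRSphere : MulAction SL2C RSphere where
  smul A := Projectivization.map (Matrix.SpecialLinearGroup.toLin' A).toLinearMap
    (Matrix.SpecialLinearGroup.toLin' A).injective
  one_smul x := by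
    induction x using Projectivization.ind with
    | h v hv =>
      show Projectivization.map _ _ _ = _
      rw [Projectivization.map_mk]
      simp
  mul_smul A B x := by
    induction x using Projectivization.ind with
    | h v hv =>
      show Projectivization.map _ _ _ =
        Projectivization.map _ _ (Projectivization.map _ _ _)
      rw [Projectivization.map_mk, Projectivization.map_mk, Projectivization.map_mk]
      simp

lemma SL2C.center_smul_eq (A : SL2C) (hA : A ∈ Subgroup.center SL2C) (x : RSphere) :
    A • x = x := by
  obtain ⟨r, hr, hrA⟩ := Matrix.SpecialLinearGroup.mem_center_iff.mp hA
  induction x using Projectivization.ind with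
  | h v hv =>
    show Projectivization.map _ _ _ = _
    rw [Projectivization.map_mk]
    have hr0 : r ≠ 0 := by
      intro h; rw [h] at hr; simpa using hr
    rw [Projectivization.mk_eq_mk_iff']
    refine ⟨r, ?_⟩
    have : (Matrix.SpecialLinearGroup.toLin' A).toLinearMap v
        = (A : Matrix (Fin 2) (Fin 2) ℂ) *ᵥ v := by
      simp [Matrix.SpecialLinearGroup.toLin'_apply, Matrix.toLin'_apply]
    rw [this, ← hrA]
    show r • v = (Matrix.scalar (Fin 2) r) *ᵥ v
    funext i
    simp [Matrix.scalar_apply, Matrix.mulVec_diagonal]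

end

noncomputable section

/-- The action of `PSL(2,ℂ)` on the Riemann sphere, descended from that of `SL(2,ℂ)`. -/
def mobiusPerm : PSL2 →* Equiv.Perm RSphere :=
  QuotientGroup.lift (Subgroup.center SL2C) (MulAction.toPermHom SL2C RSphere)
    (by
      intro A hA
      ext x
      simpa using SL2C.center_smul_eq A hA x)

/-- Elements of `PSL(2,ℂ)` act on the Riemann sphere as Möbius transformations. -/
instance PSL2.mulActionRSphere : MulAction PSL2 RSphere where
  smul γ x := mobiusPerm γ x
  one_smul x := by
    show mobiusPerm 1 x = x
    simp
  mul_smul a b x := by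
    show mobiusPerm (a * b) x = mobiusPerm a (mobiusPerm b x)
    simp

end

noncomputable section

/-- A Möbius transformation is parabolic if it is not the identity and has exactly one
fixed point on the Riemann sphere. -/
def IsParabolic (γ : PSL2) : Prop :=
  γ ≠ 1 ∧ ∃! z : RSphere, γ • z = z

/-- The `PSL(2,ℂ)`-element corresponding to `z ↦ μ² z` (represented by the diagonal
matrix with entries `μ, μ⁻¹`). -/
def dilation (μ : ℂˣ) : PSL2 :=
  QuotientGroup.mk (⟨!![(μ : ℂ), 0; 0, ((μ⁻¹ : ℂˣ) : ℂ)], by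
    simp [Matrix.det_fin_two_of]⟩ : SL2C)

/-- A Möbius transformation is loxodromic if it is conjugate in `PSL(2,ℂ)` to `z ↦ λ z`
for some `λ ≠ 0` with `|λ| ≠ 1`.  (Every such `λ` is of the form `μ²` for a unit `μ`.) -/
def IsLoxodromic (γ : PSL2) : Prop :=
  ∃ μ : ℂˣ, ‖((μ : ℂ) ^ 2)‖ ≠ 1 ∧ ∃ β : PSL2, β * γ * β⁻¹ = dilation μ

/-- A representation is discrete and faithful if it is injective with discrete image. -/
def IsDiscreteFaithful {G : Type*} [Group G] (ρ : G →* PSL2) : Prop :=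
  Function.Injective ρ ∧ DiscreteTopology ρ.range

/-- Algebraic convergence of a sequence of representations. -/
def ConvergesAlgebraically {G : Type*} [Group G] (ρs : ℕ → G →* PSL2) (ρ : G →* PSL2) : Prop :=
  ∀ g : G, Tendsto (fun j => ρs j g) atTop (𝓝 (ρ g))

/-- A sequence of representations with algebraic limit `ρ` is type-preserving if `ρs j g` is
parabolic exactly when `ρ g` is. -/
def TypePreserving {G : Type*} [Group G] (ρs : ℕ → G →* PSL2) (ρ : G →* PSL2) : Prop :=
  ∀ (j : ℕ) (g : G), IsParabolic (ρs j g) ↔ IsParabolic (ρ g)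

/-- Geometric convergence of a sequence of subgroups of `PSL(2,ℂ)`: every element of the limit
is a limit of elements of the approximates, and every accumulation point of a sequence of
elements of the approximates lies in the limit. -/
def GeometricallyConvergesTo (Γs : ℕ → Subgroup PSL2) (Γ : Subgroup PSL2) : Prop :=
  (∀ γ ∈ Γ, ∃ s : ℕ → PSL2, (∀ j, s j ∈ Γs j) ∧ Tendsto s atTop (𝓝 γ)) ∧
  (∀ s : ℕ → PSL2, (∀ j, s j ∈ Γs j) → ∀ γ : PSL2, MapClusterPt γ atTop s → γ ∈ Γ)

/-- Strong convergence: algebraic convergence together with geometric convergence of the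
images. -/
def ConvergesStrongly {G : Type*} [Group G] (ρs : ℕ → G →* PSL2) (ρ : G →* PSL2) : Prop :=
  ConvergesAlgebraically ρs ρ ∧ GeometricallyConvergesTo (fun j => (ρs j).range) ρ.range

/-- Hausdorff convergence of a sequence of (closed) subsets of the Riemann sphere. -/
def HausdorffConvergesTo (Xs : ℕ → Set RSphere) (X : Set RSphere) : Prop :=
  (∀ x ∈ X, ∃ s : ℕ → RSphere, (∀ j, s j ∈ Xs j) ∧ Tendsto s atTop (𝓝 x)) ∧
  (∀ s : ℕ → RSphere, (∀ j, s j ∈ Xs j) → ∀ x : RSphere, MapClusterPt x atTop s → x ∈ X)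

/-- A group of Möbius transformations acts properly discontinuously on an open set `U` if for
every compact `K ⊆ U` only finitely many group elements carry `K` to a set meeting `K`. -/
def ProperlyDiscontinuousOn (Γ : Subgroup PSL2) (U : Set RSphere) : Prop :=
  ∀ K : Set RSphere, K ⊆ U → IsCompact K →
    {γ : PSL2 | γ ∈ Γ ∧ ((γ • K) ∩ K).Nonempty}.Finite

/-- The domain of discontinuity: the largest open set on which `Γ` acts properly
discontinuously. -/
def domainOfDiscontinuity (Γ : Subgroup PSL2) : Set RSphere :=
  ⋃₀ {U : Set RSphere | IsOpen U ∧ ProperlyDiscontinuousOn Γ U}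

/-- The limit set: the complement of the domain of discontinuity. -/
def limitSet (Γ : Subgroup PSL2) : Set RSphere :=
  (domainOfDiscontinuity Γ)ᶜ

/-- The connected components of a subset of the Riemann sphere. -/
def componentsOf (S : Set RSphere) : Set (Set RSphere) :=
  {Δ : Set RSphere | ∃ z ∈ S, Δ = connectedComponentIn S z}

/-- The component subgroup of `Γ` associated to `Δ`: the stabilizer of `Δ` in `Γ`. -/
def componentSubgroup (Γ : Subgroup PSL2) (Δ : Set RSphere) : Subgroup PSL2 :=
  Γ ⊓ MulAction.stabilizer PSL2 Δ

/-- `Φ` is a component subgroup of `Γ` if it is the stabilizer in `Γ` of a connected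
component of the domain of discontinuity of `Γ`. -/
def IsComponentSubgroup (Γ Φ : Subgroup PSL2) : Prop :=
  ∃ Δ ∈ componentsOf (domainOfDiscontinuity Γ), Φ = componentSubgroup Γ Δ

/-- A Jordan curve in the Riemann sphere: the image of a continuous injection of the circle. -/
def IsJordanCurve (C : Set RSphere) : Prop :=
  ∃ f : Circle → RSphere, Continuous f ∧ Function.Injective f ∧ Set.range f = C

/-- `γ` interchanges two distinct components of the domain of discontinuity of `Γ`. -/
def SwapsComponents (Γ : Subgroup PSL2) (γ : PSL2) : Prop :=
  ∃ Δ₁ ∈ componentsOf (domainOfDiscontinuity Γ),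
    ∃ Δ₂ ∈ componentsOf (domainOfDiscontinuity Γ),
      Δ₁ ≠ Δ₂ ∧ γ • Δ₁ = Δ₂ ∧ γ • Δ₂ = Δ₁

/-- A quasifuchsian group: a finitely generated Kleinian group whose limit set is a Jordan
curve, containing no element interchanging the two components of its domain of
discontinuity. -/
def IsQuasifuchsian (Γ : Subgroup PSL2) : Prop :=
  Group.FG Γ ∧ DiscreteTopology Γ ∧ IsJordanCurve (limitSet Γ) ∧
    ¬ ∃ γ ∈ Γ, SwapsComponents Γ γ

/-- An extended quasifuchsian group: as above, but containing an element interchanging the two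
components of its domain of discontinuity. -/
def IsExtendedQuasifuchsian (Γ : Subgroup PSL2) : Prop :=
  Group.FG Γ ∧ DiscreteTopology Γ ∧ IsJordanCurve (limitSet Γ) ∧
    ∃ γ ∈ Γ, SwapsComponents Γ γ

/-- A web group: a finitely generated Kleinian group whose domain of discontinuity has
infinitely many components, all of whose component subgroups are quasifuchsian. -/
def IsWebGroup (Γ : Subgroup PSL2) : Prop :=
  Group.FG Γ ∧ DiscreteTopology Γ ∧
    (componentsOf (domainOfDiscontinuity Γ)).Infinite ∧
    ∀ Δ ∈ componentsOf (domainOfDiscontinuity Γ), IsQuasifuchsian (componentSubgroup Γ Δ)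

/-- A generalized web group is quasifuchsian, extended quasifuchsian or web. -/
def IsGeneralizedWebGroup (Γ : Subgroup PSL2) : Prop :=
  IsQuasifuchsian Γ ∨ IsExtendedQuasifuchsian Γ ∨ IsWebGroup Γ

/-- `X` is precisely invariant under `Φ` in `Γ` if `Φ` is the stabilizer of `X` in `Γ` and
no element of `Γ ∖ Φ` carries `X` to a set meeting `X`. -/
def PreciselyInvariant (Γ Φ : Subgroup PSL2) (X : Set RSphere) : Prop :=
  Φ ≤ Γ ∧ (∀ γ ∈ Γ, (γ • X = X ↔ γ ∈ Φ)) ∧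
    ∀ γ ∈ Γ, γ ∉ Φ → Disjoint (γ • X) X

/-- `γ` is primitive in `Γ`: it is not a power `δ^n` with `δ ∈ Γ` and `|n| ≥ 2`. -/
def IsPrimitiveIn (Γ : Subgroup PSL2) (γ : PSL2) : Prop :=
  ¬ ∃ δ ∈ Γ, ∃ n : ℤ, 2 ≤ |n| ∧ δ ^ n = γ

/-- A closed Jordan domain: the closure of a connected component of the complement of a
Jordan curve. -/
def IsClosedJordanDomain (D : Set RSphere) : Prop :=
  ∃ C : Set RSphere, IsJordanCurve C ∧
    ∃ z ∈ Cᶜ, D = closure (connectedComponentIn Cᶜ z)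

/-- A cusp region for a parabolic `γ ∈ Γ`: a closed Jordan domain, precisely invariant under
`⟨γ⟩` in `Γ`, meeting the limit set exactly in the fixed point of `γ`. -/
def IsCuspRegion (Γ : Subgroup PSL2) (γ : PSL2) (D : Set RSphere) : Prop :=
  IsClosedJordanDomain D ∧ PreciselyInvariant Γ (Subgroup.zpowers γ) D ∧
    D ∩ limitSet Γ = {z : RSphere | γ • z = z}

/-- The cusp region `D` for the primitive parabolic `ρ h` persists in the approximates:
whenever the sequence is normalized about `ρ h` by conjugating by Möbius transformations
`β j → 1` with `β j * ρs j h * (β j)⁻¹ = ρ h`, `D` is a cusp region for `ρ h` in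
`β j • ρs j (G) • (β j)⁻¹` for all sufficiently large `j`. -/
def PersistsInApproximates {G : Type*} [Group G] (ρs : ℕ → G →* PSL2) (ρ : G →* PSL2)
    (h : G) (D : Set RSphere) : Prop :=
  ∀ β : ℕ → PSL2, Tendsto β atTop (𝓝 1) → (∀ j, β j * ρs j h * (β j)⁻¹ = ρ h) →
    ∀ᶠ j in atTop,
      IsCuspRegion (Subgroup.map (MulAut.conj (β j)).toMonoidHom (ρs j).range) (ρ h) D

/-- A degenerate group: a finitely generated Kleinian group whose domain of discontinuity
and limit set are both non-empty and connected. -/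
def IsDegenerate (Γ : Subgroup PSL2) : Prop :=
  Group.FG Γ ∧ DiscreteTopology Γ ∧ IsConnected (domainOfDiscontinuity Γ) ∧
    IsConnected (limitSet Γ)

/-- A degenerate group without accidental parabolics: every primitive parabolic element
stabilizing a component `Δ` of the domain of discontinuity has a cusp region contained
(off the limit set) in `Δ`. -/
def IsDegenerateWithoutAccidentalParabolics (Γ : Subgroup PSL2) : Prop :=
  IsDegenerate Γ ∧
    ∀ γ ∈ Γ, IsParabolic γ → IsPrimitiveIn Γ γ →
      ∀ Δ ∈ componentsOf (domainOfDiscontinuity Γ), γ • Δ = Δ →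
        ∃ D : Set RSphere, IsCuspRegion Γ γ D ∧ D \ limitSet Γ ⊆ Δ

/-- An elementary group: the limit set contains at most two points. -/
def IsElementary (Γ : Subgroup PSL2) : Prop :=
  ∀ x ∈ limitSet Γ, ∀ y ∈ limitSet Γ, ∀ z ∈ limitSet Γ, x = y ∨ x = z ∨ y = z

/-- A fundamental domain for `Γ`: an open subset of the domain of discontinuity, disjoint
from all its translates by non-trivial elements of `Γ`, whose closure meets every
`Γ`-orbit in the domain of discontinuity. -/
def IsFundamentalDomain (Γ : Subgroup PSL2) (D : Set RSphere) : Prop :=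
  IsOpen D ∧ D ⊆ domainOfDiscontinuity Γ ∧
    (∀ γ ∈ Γ, γ ≠ 1 → Disjoint (γ • D) D) ∧
    ∀ z ∈ domainOfDiscontinuity Γ, ∃ γ ∈ Γ, γ • z ∈ closure D

/-- A group is virtually abelian if it has an abelian subgroup of finite index. -/
def VirtuallyAbelian (G : Type*) [Group G] : Prop :=
  ∃ H : Subgroup G, H.FiniteIndex ∧ ∀ a ∈ H, ∀ b ∈ H, a * b = b * a

open scoped commutatorElement in
/-- The relator `[a₁,b₁]⋯[a_g,b_g]` of the genus-`g` surface group, in the free group on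
generators `aᵢ = (i, true)`, `bᵢ = (i, false)`. -/
def surfaceRelator (g : ℕ) : FreeGroup (Fin g × Bool) :=
  ((List.finRange g).map fun i =>
    ⁅FreeGroup.of (i, true), FreeGroup.of (i, false)⁆).prod

/-- The fundamental group of the closed orientable surface of genus `g`. -/
def SurfaceGroup (g : ℕ) : Type :=
  PresentedGroup ({surfaceRelator g} : Set (FreeGroup (Fin g × Bool)))

instance (g : ℕ) : Group (SurfaceGroup g) :=
  inferInstanceAs (Group (PresentedGroup _))

/-- An orientable surface group: a group isomorphic to the fundamental group of a closed
orientable surface of genus `g ≥ 1`. -/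
def IsSurfaceGroup (A : Type*) [Group A] : Prop :=
  ∃ g : ℕ, 1 ≤ g ∧ Nonempty (A ≃* SurfaceGroup g)

/-- `G` is a non-trivial free product of orientable surface groups and infinite cyclic
groups. -/
def IsFreeProductOfSurfaceAndCyclicGroups (G : Type*) [Group G] : Prop :=
  ∃ k : ℕ, 2 ≤ k ∧ ∃ (A : Fin k → Type) (_ : ∀ i, Group (A i)),
    (∀ i, IsSurfaceGroup (A i) ∨ Nonempty (A i ≃* Multiplicative ℤ)) ∧
    Nonempty (G ≃* Monoid.CoprodI A)

end

noncomputable section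

/-- The two-element family of subgroups `G₁`, `G₂`. -/
def amalgFamily {G : Type*} [Group G] (G₁ G₂ : Subgroup G) : Bool → Subgroup G
  | true => G₁
  | false => G₂

/-- The inclusions of `⟨h⟩` into `G₁` and `G₂`. -/
def amalgIncl {G : Type*} [Group G] {G₁ G₂ : Subgroup G} {h : G}
    (h1 : Subgroup.zpowers h ≤ G₁) (h2 : Subgroup.zpowers h ≤ G₂) :
    ∀ i : Bool, ↥(Subgroup.zpowers h) →* ↥(amalgFamily G₁ G₂ i)
  | true => Subgroup.inclusion h1
  | false => Subgroup.inclusion h2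

/-- The natural homomorphism from the amalgamated free product `G₁ *_{⟨h⟩} G₂` to `G`. -/
def amalgamatedToGroup {G : Type*} [Group G] {G₁ G₂ : Subgroup G} {h : G}
    (h1 : Subgroup.zpowers h ≤ G₁) (h2 : Subgroup.zpowers h ≤ G₂) :
    Monoid.PushoutI (amalgIncl h1 h2) →* G :=
  Monoid.PushoutI.lift (fun i => (amalgFamily G₁ G₂ i).subtype)
    (Subgroup.zpowers h).subtype
    (by intro i; cases i <;> (ext x; rfl))

end

/-!
A parabolic element lifts to a unipotent matrix of `SL(2,ℂ)`: if the trace were not `±2`, the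
two distinct eigenvalues `λ, λ⁻¹` would give two eigenlines, i.e. two fixed points. Trace-`2`
lifts of `P j` converge to the trace-`2` lift of `Q`, since `X ↦ tr X • X` descends continuously
to `PSL(2,ℂ)`. A unipotent `X ≠ 1` is conjugate to the Jordan block `!![1, 0; 1, 1]` by the
matrix with columns `u, (X - 1) u`, for any `u` with `(X - 1) u ≠ 0`. Fixing one such `u` for the
limit, these matrices, rescaled to determinant one, depend continuously on `X`, so the resulting
conjugators from `P j` to `Q` tend to the identity.
-/
namespace Matrix

variable {K : Type*} [Field K]

theorem det_sub_smul_one_fin_two (X : Matrix (Fin 2) (Fin 2) K) (μ : K) :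
    (X - μ • 1).det = μ ^ 2 - X.trace * μ + X.det := by
  simp [det_fin_two, trace_fin_two]
  ring

theorem exists_mulVec_eq_smul_of_sq_sub_trace_mul_add_det {X : Matrix (Fin 2) (Fin 2) K} {μ : K}
    (hμ : μ ^ 2 - X.trace * μ + X.det = 0) : ∃ v ≠ 0, X *ᵥ v = μ • v := by
  obtain ⟨v, hv, hXv⟩ := exists_mulVec_eq_zero_iff.mpr ((det_sub_smul_one_fin_two X μ).trans hμ)
  refine ⟨v, hv, ?_⟩
  rwa [sub_mulVec, smul_mulVec, one_mulVec, sub_eq_zero] at hXv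

theorem sub_one_mul_self_eq_zero_of_trace_eq_two {X : Matrix (Fin 2) (Fin 2) K}
    (hdet : X.det = 1) (htr : X.trace = 2) : (X - 1) * (X - 1) = 0 := by
  rw [det_fin_two] at hdet
  rw [trace_fin_two] at htr
  ext i j
  fin_cases i <;> fin_cases j <;> simp [mul_apply, Fin.sum_univ_two, one_apply]
  · linear_combination -hdet + X 0 0 * htr
  · linear_combination X 0 1 * htr
  · linear_combination X 1 0 * htr
  · linear_combination -hdet + X 1 1 * htr

theorem exists_mulVec_ne_zero {N : Matrix (Fin 2) (Fin 2) K} (hN : N ≠ 0) : ∃ v, N *ᵥ v ≠ 0 := by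
  by_contra! h
  exact hN (toLin'.injective (LinearMap.ext fun v => by simpa using h v))

def cyclicMatrix (N : Matrix (Fin 2) (Fin 2) K) (u : Fin 2 → K) : Matrix (Fin 2) (Fin 2) K :=
  (of ![u, N *ᵥ u])ᵀ

theorem cyclicMatrix_mulVec (N : Matrix (Fin 2) (Fin 2) K) (u v : Fin 2 → K) :
    cyclicMatrix N u *ᵥ v = v 0 • u + v 1 • N *ᵥ u := by
  ext i
  fin_cases i <;> simp [cyclicMatrix, mulVec, dotProduct, Fin.sum_univ_two] <;> ring

theorem det_cyclicMatrix_ne_zero {N : Matrix (Fin 2) (Fin 2) K} {u : Fin 2 → K}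
    (hN : N * N = 0) (hu : N *ᵥ u ≠ 0) : (cyclicMatrix N u).det ≠ 0 := by
  intro h
  obtain ⟨v, hv, hMv⟩ := exists_mulVec_eq_zero_iff.mpr h
  rw [cyclicMatrix_mulVec] at hMv
  have hv0 : v 0 = 0 := by
    have := congrArg (N *ᵥ ·) hMv
    simp only [mulVec_add, mulVec_smul, mulVec_mulVec, hN, zero_mulVec, smul_zero, add_zero,
      mulVec_zero] at this
    exact (smul_eq_zero.mp this).resolve_right hu
  have hv1 : v 1 = 0 := by
    rw [hv0, zero_smul, zero_add] at hMv
    exact (smul_eq_zero.mp hMv).resolve_right hu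
  exact hv (funext fun i => by fin_cases i <;> assumption)

theorem mul_cyclicMatrix (X N : Matrix (Fin 2) (Fin 2) K) (u : Fin 2 → K) :
    X * cyclicMatrix N u = (of ![X *ᵥ u, X *ᵥ (N *ᵥ u)])ᵀ := by
  ext i j
  fin_cases j <;> rfl

theorem mul_cyclicMatrix_sub_one {X : Matrix (Fin 2) (Fin 2) K} (hX : (X - 1) * (X - 1) = 0)
    (u : Fin 2 → K) :
    X * cyclicMatrix (X - 1) u = cyclicMatrix (X - 1) u * !![1, 0; 1, 1] := by
  have hXN : X * (X - 1) = X - 1 := by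
    rw [← sub_eq_zero, ← hX]; noncomm_ring
  have hXu : X *ᵥ u = u + (X - 1) *ᵥ u := by
    rw [sub_mulVec, one_mulVec, add_sub_cancel]
  rw [mul_cyclicMatrix, mulVec_mulVec, hXN, hXu]
  ext i j
  fin_cases i <;> fin_cases j <;> simp [cyclicMatrix, mul_apply, Fin.sum_univ_two, vecHead, vecTail]

theorem mul_nonsing_inv_mul_of_intertwine {n R : Type*} [Fintype n] [DecidableEq n] [CommRing R]
    {A X M N J : Matrix n n R} (hA : A * M = M * J) (hX : X * N = N * J) (hN : IsUnit N.det) :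
    M * N⁻¹ * X = A * (M * N⁻¹) :=
  calc M * N⁻¹ * X = M * (N⁻¹ * (X * N) * N⁻¹) := by
        rw [← mul_assoc N⁻¹, mul_nonsing_inv_cancel_right _ _ hN, mul_assoc]
    _ = A * (M * N⁻¹) := by
        rw [hX, nonsing_inv_mul_cancel_left _ _ hN, ← mul_assoc, ← hA, mul_assoc]

end Matrix

local notation "M₂" => Matrix (Fin 2) (Fin 2) ℂ

namespace PSL2

theorem mk_smul_mk (X : SL2C) {v : Fin 2 → ℂ} (hv : v ≠ 0) :
    (QuotientGroup.mk X : PSL2) • Projectivization.mk ℂ v hv =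
      Projectivization.mk ℂ ((X : M₂) *ᵥ v)
        ((Matrix.SpecialLinearGroup.toLin' X).map_ne_zero_iff.mpr hv) := by
  rfl

theorem mk_smul_mk_eq_self_of_mulVec_eq_smul (X : SL2C) {v : Fin 2 → ℂ} (hv : v ≠ 0) {μ : ℂ}
    (h : (X : M₂) *ᵥ v = μ • v) :
    (QuotientGroup.mk X : PSL2) • Projectivization.mk ℂ v hv = Projectivization.mk ℂ v hv := by
  rw [mk_smul_mk]
  exact (Projectivization.mk_eq_mk_iff' ..).mpr ⟨μ, h.symm⟩

theorem mk_neg (X : SL2C) : (QuotientGroup.mk (-X) : PSL2) = QuotientGroup.mk X := by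
  have hc : (-1 : SL2C) ∈ Subgroup.center SL2C :=
    Subgroup.mem_center_iff.mpr fun g => by rw [neg_one_mul, mul_neg_one]
  rw [← neg_one_mul, QuotientGroup.mk_mul, (QuotientGroup.eq_one_iff _).mpr hc, one_mul]

/-- `X ↦ tr X • X` is invariant under `X ↦ -X`, so it descends to `PSL(2,ℂ)`. -/
def tracedMatrix : PSL2 → M₂ :=
  Quotient.lift (fun X : SL2C => (X : M₂).trace • (X : M₂))
    (by
      intro X Y hXY
      have hc : X⁻¹ * Y ∈ Subgroup.center SL2C := QuotientGroup.leftRel_apply.mp hXY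
      obtain ⟨r, hr, hrXY⟩ := Matrix.SpecialLinearGroup.mem_center_iff.mp hc
      have hY : (Y : M₂) = r • (X : M₂) := by
        rw [← mul_inv_cancel_left X Y, Matrix.SpecialLinearGroup.coe_mul, ← hrXY, scalar_apply,
          ← smul_one_eq_diagonal, Matrix.mul_smul, mul_one]
      simp only [Fintype.card_fin] at hr
      rw [hY, trace_smul, smul_smul, smul_eq_mul]
      congr 1
      linear_combination -(X : M₂).trace * hr)

theorem tracedMatrix_mk (X : SL2C) : tracedMatrix X = (X : M₂).trace • (X : M₂) := rfl

theorem continuous_tracedMatrix : Continuous tracedMatrix :=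
  Continuous.quotient_lift (continuous_subtype_val.matrix_trace.smul continuous_subtype_val) _

theorem tendsto_coe_of_trace_eq_two {ι : Type*} {l : Filter ι} {X : ι → SL2C} {A : SL2C}
    (hX : ∀ i, (X i : M₂).trace = 2) (hA : (A : M₂).trace = 2)
    (h : Tendsto (fun i => (QuotientGroup.mk (X i) : PSL2)) l (𝓝 A)) :
    Tendsto (fun i => (X i : M₂)) l (𝓝 A) := by
  have := ((continuous_tracedMatrix.tendsto _).comp h).const_smul (2⁻¹ : ℂ)
  simpa [Function.comp_def, tracedMatrix_mk, hX, hA, smul_smul] using this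

end PSL2

theorem IsParabolic.trace_sq_eq_four {X : SL2C} (hX : IsParabolic (QuotientGroup.mk X : PSL2)) :
    (X : M₂).trace ^ 2 = 4 := by
  set t := (X : M₂).trace
  obtain ⟨s, hs⟩ := IsAlgClosed.exists_eq_mul_self (t ^ 2 - 4)
  have hroot : ∀ μ : ℂ, μ ^ 2 - t * μ + 1 = 0 → ∃ v ≠ 0, (X : M₂) *ᵥ v = μ • v :=
    fun μ hμ => exists_mulVec_eq_smul_of_sq_sub_trace_mul_add_det (by rwa [X.prop])
  obtain ⟨v, hv, hXv⟩ := hroot ((t + s) / 2) (by linear_combination -hs / 4)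
  obtain ⟨w, hw, hXw⟩ := hroot ((t - s) / 2) (by linear_combination -hs / 4)
  obtain ⟨c, hc⟩ := (Projectivization.mk_eq_mk_iff' ℂ v w hv hw).mp
    (hX.2.unique (PSL2.mk_smul_mk_eq_self_of_mulVec_eq_smul X hv hXv)
      (PSL2.mk_smul_mk_eq_self_of_mulVec_eq_smul X hw hXw))
  have hμ : ((t + s) / 2) • v = ((t - s) / 2) • v := by
    rw [← hXv, ← hc, mulVec_smul, hXw, smul_comm]
  have hsv : s • v = 0 := by
    rw [show s = (t + s) / 2 - (t - s) / 2 by ring, sub_smul, hμ, sub_self]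
  have hs0 : s = 0 := (smul_eq_zero.mp hsv).resolve_right hv
  linear_combination hs + s * hs0

theorem IsParabolic.exists_mk_eq_trace_eq_two {γ : PSL2} (hγ : IsParabolic γ) :
    ∃ a : SL2C, (QuotientGroup.mk a : PSL2) = γ ∧ (a : M₂).trace = 2 := by
  obtain ⟨X, rfl⟩ := QuotientGroup.mk_surjective γ
  rcases sq_eq_sq_iff_eq_or_eq_neg.mp (hγ.trace_sq_eq_four.trans (by norm_num : (4 : ℂ) = 2 ^ 2))
    with h | h
  · exact ⟨X, rfl, h⟩
  · exact ⟨-X, PSL2.mk_neg X, by rw [Matrix.SpecialLinearGroup.coe_neg, trace_neg, h, neg_neg]⟩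

namespace Matrix

/-- Maps the basis `v, (X - 1) v` to the basis `u, (A - 1) u`, rescaled to determinant one. -/
noncomputable def unipotentConjugator (A : M₂) (u : Fin 2 → ℂ) (X : M₂) (v : Fin 2 → ℂ) : M₂ :=
  ((cyclicMatrix (X - 1) v).det / (cyclicMatrix (A - 1) u).det) ^ (2⁻¹ : ℂ) •
    (cyclicMatrix (A - 1) u * (cyclicMatrix (X - 1) v)⁻¹)

section unipotentConjugator

variable {A X : M₂} {u v : Fin 2 → ℂ}

theorem unipotentConjugator_mul (hA : (A - 1) * (A - 1) = 0) (hX : (X - 1) * (X - 1) = 0)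
    (hv : (X - 1) *ᵥ v ≠ 0) :
    unipotentConjugator A u X v * X = A * unipotentConjugator A u X v := by
  rw [unipotentConjugator, smul_mul, Matrix.mul_smul,
    mul_nonsing_inv_mul_of_intertwine (mul_cyclicMatrix_sub_one hA u)
      (mul_cyclicMatrix_sub_one hX v) (det_cyclicMatrix_ne_zero hX hv).isUnit]

theorem det_unipotentConjugator (hA : (A - 1) * (A - 1) = 0) (hX : (X - 1) * (X - 1) = 0)
    (hu : (A - 1) *ᵥ u ≠ 0) (hv : (X - 1) *ᵥ v ≠ 0) :
    (unipotentConjugator A u X v).det = 1 := by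
  have hdA := det_cyclicMatrix_ne_zero hA hu
  have hdX := det_cyclicMatrix_ne_zero hX hv
  rw [unipotentConjugator, det_smul, det_mul, det_nonsing_inv, Fintype.card_fin,
    Complex.cpow_ofNat_inv_pow, Ring.inverse_eq_inv']
  field_simp

theorem unipotentConjugator_self (hu : (cyclicMatrix (A - 1) u).det ≠ 0) :
    unipotentConjugator A u A u = 1 := by
  rw [unipotentConjugator, div_self hu, Complex.one_cpow, one_smul,
    mul_nonsing_inv _ hu.isUnit]

theorem continuous_cyclicMatrix_sub_one (u : Fin 2 → ℂ) :
    Continuous fun X : M₂ => cyclicMatrix (X - 1) u := by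
  refine continuous_matrix fun i j => ?_
  fin_cases j
  · exact continuous_const
  · exact (continuous_apply i).comp
      ((continuous_id.sub continuous_const).matrix_mulVec continuous_const)

theorem continuousAt_unipotentConjugator (hu : (cyclicMatrix (A - 1) u).det ≠ 0) :
    ContinuousAt (fun X => unipotentConjugator A u X u) A := by
  have hdet := (continuous_cyclicMatrix_sub_one u).matrix_det.continuousAt (x := A)
  have hinv : ContinuousAt (fun X : M₂ => (cyclicMatrix (X - 1) u)⁻¹) A :=
    (continuousAt_matrix_inv _ (by rw [Ring.inverse_eq_inv']; exact continuousAt_inv₀ hu)).comp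
      (continuous_cyclicMatrix_sub_one u).continuousAt
  have hsqrt : ContinuousAt (fun z : ℂ => z ^ (2⁻¹ : ℂ)) 1 :=
    continuousAt_cpow_const Complex.one_mem_slitPlane
  exact (hsqrt.comp_of_eq (hdet.div_const _) (div_self hu)).smul (continuousAt_const.mul hinv)

end unipotentConjugator

end Matrix

theorem SL2C.exists_conj_eq_of_tendsto {ι : Type*} {l : Filter ι} {X : ι → SL2C} {A : SL2C}
    (hX : ∀ i, (X i : M₂).trace = 2) (hX1 : ∀ i, X i ≠ 1)
    (hA : (A : M₂).trace = 2) (hA1 : A ≠ 1)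
    (h : Tendsto (fun i => (X i : M₂)) l (𝓝 A)) :
    ∃ B : ι → SL2C, Tendsto B l (𝓝 1) ∧ ∀ i, B i * X i * (B i)⁻¹ = A := by
  have hsq : ∀ Y : SL2C, (Y : M₂).trace = 2 →
      ((Y : M₂) - 1) * ((Y : M₂) - 1) = 0 :=
    fun Y hY => sub_one_mul_self_eq_zero_of_trace_eq_two Y.prop hY
  have hne : ∀ Y : SL2C, Y ≠ 1 → (Y : M₂) - 1 ≠ 0 := fun Y hY =>
    sub_ne_zero.mpr fun h => hY (Subtype.ext h)
  obtain ⟨u, hu⟩ := exists_mulVec_ne_zero (hne A hA1)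
  choose w hw using fun i => exists_mulVec_ne_zero (hne (X i) (hX1 i))
  -- `u` serves every `X i` close to `A`; the others use their own vector
  set v : ι → Fin 2 → ℂ := fun i => if ((X i : M₂) - 1) *ᵥ u = 0 then w i else u
  have hv : ∀ i, ((X i : M₂) - 1) *ᵥ v i ≠ 0 := fun i => by
    simp only [v]; split_ifs with h
    exacts [hw i, h]
  have hvu : ∀ᶠ i in l, v i = u := by
    have hc : Continuous fun Y : M₂ => (Y - 1) *ᵥ u :=
      (continuous_id.sub continuous_const).matrix_mulVec continuous_const
    filter_upwards [(hc.tendsto _).comp h |>.eventually_ne hu] with i hi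
    exact if_neg hi
  let B : ι → SL2C := fun i => ⟨unipotentConjugator A u (X i) (v i),
    det_unipotentConjugator (hsq A hA) (hsq _ (hX i)) hu (hv i)⟩
  refine ⟨B, ?_, fun i => ?_⟩
  · have hlim := (continuousAt_unipotentConjugator
      (det_cyclicMatrix_ne_zero (hsq A hA) hu)).tendsto.comp h
    rw [unipotentConjugator_self (det_cyclicMatrix_ne_zero (hsq A hA) hu)] at hlim
    refine Topology.IsEmbedding.subtypeVal.tendsto_nhds_iff.mpr (hlim.congr' ?_)
    filter_upwards [hvu] with i hi
    simp [B, hi]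
  · have hBX : B i * X i = A * B i :=
      Subtype.ext (unipotentConjugator_mul (hsq A hA) (hsq _ (hX i)) (hv i))
    rw [hBX, mul_inv_cancel_right]

/-- a sequence of parabolics converging to a parabolic can be conjugated
to it by Möbius transformations converging to the identity. -/
theorem parabolic_normalization (P : ℕ → PSL2) (Q : PSL2)
    (hP : ∀ j, IsParabolic (P j)) (hQ : IsParabolic Q)
    (hconv : Tendsto P atTop (𝓝 Q)) :
    ∃ β : ℕ → PSL2, Tendsto β atTop (𝓝 1) ∧ ∀ j, β j * P j * (β j)⁻¹ = Q := by
  obtain ⟨A, rfl, hA⟩ := hQ.exists_mk_eq_trace_eq_two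
  choose X hXP hX using fun j => (hP j).exists_mk_eq_trace_eq_two
  have hne : ∀ {Y : SL2C}, IsParabolic (Y : PSL2) → Y ≠ 1 := fun hY h => hY.1 (by rw [h]; rfl)
  obtain ⟨B, hB, hBX⟩ := SL2C.exists_conj_eq_of_tendsto hX (fun j => hne (hXP j ▸ hP j)) hA (hne hQ)
    (PSL2.tendsto_coe_of_trace_eq_two hX hA (by simpa only [hXP] using hconv))
  refine ⟨fun j => B j, QuotientGroup.continuous_mk.continuousAt.tendsto.comp hB, fun j => ?_⟩
  rw [← hXP j, ← hBX j]
  rfl
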